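/- If σ ≠ id is a permutation of {1,...,n}, then the automorphism group of the quandle P_n^σ is isomorphic to the centralizer of σ in the symmetric group S_n. -/

import Mathlib

/-- The operation of `P_n^σ` on `{0,1,...,n}`: `x*y = x` if `y ≠ 0`, `x*0 = σ x`
(with `σ` a permutation fixing `0`, encoding a permutation of `{1,...,n}`). -/
def pOp {n : ℕ} (σ : Equiv.Perm (Fin (n + 1))) (x y : Fin (n + 1)) : Fin (n + 1) :=
  if y = 0 then σ x else x

/-- The automorphism group of the quandle `P_n^σ`: bijective quandle endomorphisms. -/
def pAut {n : ℕ} (σ : Equiv.Perm (Fin (n + 1))) : Subgroup (Equiv.Perm (Fin (n + 1))) where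
  carrier := {f | ∀ x y, f (pOp σ x y) = pOp σ (f x) (f y)}
  one_mem' := fun _ _ => rfl
  mul_mem' := by
    intro f g hf hg x y
    simp only [Equiv.Perm.coe_mul, Function.comp_apply]
    rw [hg, hf]
  inv_mem' := by
    intro f hf x y
    apply f.injective
    rw [hf (f⁻¹ x) (f⁻¹ y)]
    simp
/-- The centralizer `C_{S_n}(σ)`, encoded as the permutations of `{0,...,n}`
fixing `0` and commuting with `σ`. -/
def pCent {n : ℕ} (σ : Equiv.Perm (Fin (n + 1))) : Subgroup (Equiv.Perm (Fin (n + 1))) where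
  carrier := {g | g 0 = 0 ∧ g * σ = σ * g}
  one_mem' := ⟨rfl, by group⟩
  mul_mem' := by
    rintro f g ⟨hf0, hfc⟩ ⟨hg0, hgc⟩
    refine ⟨by simp [Equiv.Perm.coe_mul, hg0, hf0], ?_⟩
    rw [mul_assoc, hgc, ← mul_assoc, hfc, mul_assoc]
  inv_mem' := by
    rintro f ⟨hf0, hfc⟩
    refine ⟨?_, (show Commute f σ from hfc).inv_left⟩
    apply f.injective
    simp [hf0]

/-!
If an automorphism `f` sent some `y ≠ 0` to `0`, then `f x = f (x * y) = f x * 0 = σ (f x)` for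
every `x`, forcing `σ = 1`. So for `σ ≠ 1` every automorphism fixes `0`, and then `f (x * 0) = f x * 0`
says exactly `f ∘ σ = σ ∘ f`. Conversely a permutation fixing `0` and commuting with `σ` preserves
both cases of the operation. Hence `Aut(P_n^σ)` and the centralizer are the same subgroup of the
permutations of `{0, …, n}`.
-/

section

variable {n : ℕ} {σ : Equiv.Perm (Fin (n + 1))}

@[simp]
theorem pOp_zero (x : Fin (n + 1)) : pOp σ x 0 = σ x := if_pos rfl

theorem pOp_of_ne_zero (x : Fin (n + 1)) {y : Fin (n + 1)} (hy : y ≠ 0) : pOp σ x y = x :=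
  if_neg hy

theorem apply_zero_of_mem_pAut (hσ : σ ≠ 1) {f : Equiv.Perm (Fin (n + 1))} (hf : f ∈ pAut σ) :
    f 0 = 0 := by
  by_contra hf0
  have hy : f.symm 0 ≠ 0 := fun h => hf0 (by rw [← h, Equiv.apply_symm_apply, h])
  refine hσ (Equiv.ext fun z => ?_)
  have hz := hf (f.symm z) (f.symm 0)
  simp only [pOp_of_ne_zero _ hy, Equiv.apply_symm_apply, pOp_zero] at hz
  exact hz.symm

theorem pAut_le_pCent (hσ : σ ≠ 1) : pAut σ ≤ pCent σ := by
  intro f hf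
  have hf0 := apply_zero_of_mem_pAut hσ hf
  refine ⟨hf0, Equiv.ext fun x => ?_⟩
  simpa [hf0] using hf x 0

theorem pCent_le_pAut (σ : Equiv.Perm (Fin (n + 1))) : pCent σ ≤ pAut σ := by
  rintro f ⟨hf0, hfσ⟩ x y
  by_cases hy : y = 0
  · subst hy
    simpa [hf0] using DFunLike.congr_fun hfσ x
  · have hfy : f y ≠ 0 := fun h => hy (f.injective (h.trans hf0.symm))
    rw [pOp_of_ne_zero _ hy, pOp_of_ne_zero _ hfy]

theorem pAut_eq_pCent (hσ : σ ≠ 1) : pAut σ = pCent σ :=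
  le_antisymm (pAut_le_pCent hσ) (pCent_le_pAut σ)

end

theorem aut_iso_centralizer_general {n : ℕ} (σ : Equiv.Perm (Fin (n + 1)))
    (hσ : σ ≠ 1) :
    Nonempty (pAut σ ≃* pCent σ) :=
  ⟨MulEquiv.subgroupCongr (pAut_eq_pCent hσ)⟩

/-- For `σ ≠ id`, `Aut(P_n^σ) ≅ C_{S_n}(σ)`. -/
theorem aut_iso_centralizer {n : ℕ} (σ : Equiv.Perm (Fin (n + 1)))
    (hσ0 : σ 0 = 0) (hσ : σ ≠ 1) :
    Nonempty (pAut σ ≃* pCent σ) :=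
  aut_iso_centralizer_general σ hσ
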